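/- Let K : ℝⁿ → ℝ be bounded and continuous, let ξ ∈ ℝⁿ, and suppose there exist β ∈ (1, n) and a continuous function Q : ℝⁿ → ℝ such that Q(λx) = λ^β Q(x) for all λ ≥ 0 and x ∈ ℝⁿ, and K(x) = K(ξ) + Q(x − ξ) + o(|x − ξ|^β) as x → ξ. Then the function y ↦ Q(y) z₀(y)^{p+1} is integrable on ℝⁿ and lim_{μ → 0⁺} (Γ(μ, ξ) − Γ(0, ξ))/μ^β = A, where A = (1/(p+1)) ∫_{ℝⁿ} Q(y) z₀(y)^{p+1} dy. -/

import Mathlib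

open MeasureTheory Filter
open scoped Topology Asymptotics

noncomputable def z0 (n : ℕ) (γ α : ℝ) (y : EuclideanSpace ℝ (Fin n)) : ℝ :=
  α * (1 + ‖y‖ ^ 2) ^ (-(((n : ℝ) - 2 * γ) / 2))

noncomputable def Gam (n : ℕ) (γ α p : ℝ) (K : EuclideanSpace ℝ (Fin n) → ℝ)
    (μ : ℝ) (ξ : EuclideanSpace ℝ (Fin n)) : ℝ :=
  (1 / (p + 1)) * ∫ y, K (μ • y + ξ) * z0 n γ α y ^ (p + 1)

/-!
Write `w = z₀^{p+1}`. Then `(Γ(μ, ξ) - Γ(0, ξ)) / μ^β` is `1/(p+1)` times the integral of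
`(K(μy + ξ) - K(ξ)) / μ^β · w(y)`, whose integrand tends pointwise to `Q(y) w(y)` by the expansion
of `K` at `ξ` and the homogeneity of `Q`. The expansion near `ξ` and the boundedness of `K` away
from `ξ` give `|K(x) - K(ξ)| ≤ L |x - ξ|^β` globally, so the integrands are dominated by
`L |y|^β w(y) ≍ |y|^β (1 + |y|)^{-2n}`, which is integrable because `β < n`; dominated convergence
concludes.
-/

section Homogeneous

variable {E : Type*} [NormedAddCommGroup E] [NormedSpace ℝ E]

theorem exists_abs_le_mul_norm_rpow_of_homogeneous [ProperSpace E] {Q : E → ℝ} {β : ℝ}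
    (hβ : 0 < β) (hQc : Continuous Q) (hQhom : ∀ l : ℝ, 0 ≤ l → ∀ x, Q (l • x) = l ^ β * Q x) :
    ∃ M, ∀ y, |Q y| ≤ M * ‖y‖ ^ β := by
  obtain ⟨M, hM⟩ :=
    (isCompact_closedBall (0 : E) 1).exists_bound_of_continuousOn hQc.continuousOn
  refine ⟨M, fun y => ?_⟩
  rcases eq_or_ne y 0 with rfl | hy
  · have hQ0 : Q 0 = 0 := by simpa [Real.zero_rpow hβ.ne'] using hQhom 0 le_rfl 0
    simp [hQ0, Real.zero_rpow hβ.ne']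
  · have hy' : 0 < ‖y‖ := norm_pos_iff.mpr hy
    have hunit : ‖y‖⁻¹ • y ∈ Metric.closedBall (0 : E) 1 := by
      simp [norm_smul, inv_mul_cancel₀ hy'.ne']
    have hQy : Q y = ‖y‖ ^ β * Q (‖y‖⁻¹ • y) := by
      rw [← hQhom _ (norm_nonneg y), smul_inv_smul₀ hy'.ne']
    rw [hQy, abs_mul, abs_of_nonneg (by positivity), mul_comm]
    exact mul_le_mul_of_nonneg_right (hM _ hunit) (by positivity)

theorem tendsto_sub_div_rpow_of_isLittleO {K Q : E → ℝ} {ξ : E} {β : ℝ}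
    (hQhom : ∀ l : ℝ, 0 ≤ l → ∀ x, Q (l • x) = l ^ β * Q x)
    (hTaylor : (fun x => K x - K ξ - Q (x - ξ)) =o[𝓝 ξ] fun x => ‖x - ξ‖ ^ β) (y : E) :
    Tendsto (fun μ : ℝ => (K (μ • y + ξ) - K ξ) / μ ^ β) (𝓝[>] 0) (𝓝 (Q y)) := by
  have hline : Tendsto (fun μ : ℝ => μ • y + ξ) (𝓝[>] 0) (𝓝 ξ) :=
    (((continuous_id.smul continuous_const).add continuous_const).tendsto' 0 ξ
      (by simp)).mono_left nhdsWithin_le_nhds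
  have hnorm : (fun μ : ℝ => ‖μ • y‖ ^ β) =O[𝓝[>] 0] fun μ => μ ^ β := by
    refine Asymptotics.IsBigO.of_bound (‖y‖ ^ β) ?_
    filter_upwards [self_mem_nhdsWithin] with μ (hμ : 0 < μ)
    rw [norm_smul, Real.norm_of_nonneg hμ.le, Real.mul_rpow hμ.le (norm_nonneg y),
      Real.norm_of_nonneg (by positivity), Real.norm_of_nonneg (by positivity), mul_comm]
  have hrem := (hTaylor.comp_tendsto hline).trans_isBigO
    (by simpa only [Function.comp_def, add_sub_cancel_right] using hnorm)
  refine (hrem.tendsto_div_nhds_zero.add_const (Q y)).congr' ?_ |>.mono_right (by simp)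
  filter_upwards [self_mem_nhdsWithin] with μ (hμ : 0 < μ)
  have hμβ : μ ^ β ≠ 0 := (Real.rpow_pos_of_pos hμ β).ne'
  simp only [Function.comp_def, add_sub_cancel_right, hQhom μ hμ.le]
  field_simp
  ring

end Homogeneous

theorem exists_abs_sub_le_mul_norm_sub_rpow {E : Type*} [SeminormedAddCommGroup E]
    {K Q : E → ℝ} {ξ : E} {β C M : ℝ} (hβ : 0 ≤ β) (hKb : ∀ x, |K x| ≤ C)
    (hQM : ∀ y, |Q y| ≤ M * ‖y‖ ^ β)
    (hTaylor : (fun x => K x - K ξ - Q (x - ξ)) =o[𝓝 ξ] fun x => ‖x - ξ‖ ^ β) :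
    ∃ L, ∀ x, |K x - K ξ| ≤ L * ‖x - ξ‖ ^ β := by
  obtain ⟨δ, hδ, hnear⟩ := Metric.eventually_nhds_iff.mp (hTaylor.def one_pos)
  refine ⟨max (M + 1) (2 * C / δ ^ β), fun x => ?_⟩
  have hd : 0 ≤ ‖x - ξ‖ ^ β := by positivity
  rcases lt_or_ge ‖x - ξ‖ δ with hx | hx
  · have hrem := hnear (show dist x ξ < δ by rwa [dist_eq_norm])
    rw [Real.norm_eq_abs, Real.norm_of_nonneg hd, one_mul] at hrem
    calc |K x - K ξ| ≤ (M + 1) * ‖x - ξ‖ ^ β := by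
          linarith [abs_sub_abs_le_abs_sub (K x - K ξ) (Q (x - ξ)), hQM (x - ξ)]
      _ ≤ _ := mul_le_mul_of_nonneg_right (le_max_left _ _) hd
  · have hδβ : 0 < δ ^ β := Real.rpow_pos_of_pos hδ β
    calc |K x - K ξ| ≤ 2 * C := by linarith [abs_sub (K x) (K ξ), hKb x, hKb ξ]
      _ = 2 * C / δ ^ β * δ ^ β := by field_simp
      _ ≤ 2 * C / δ ^ β * ‖x - ξ‖ ^ β := by
        have hC : 0 ≤ C := (abs_nonneg _).trans (hKb ξ)
        gcongr
      _ ≤ _ := mul_le_mul_of_nonneg_right (le_max_right _ _) hd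

section Integral

variable {E : Type*} [NormedAddCommGroup E] [MeasurableSpace E]

theorem integrable_mul_of_abs_le_mul_norm_rpow {ν : Measure E} {Q w : E → ℝ} {β M : ℝ}
    (hQ : AEStronglyMeasurable Q ν) (hw : AEStronglyMeasurable w ν)
    (hQM : ∀ y, |Q y| ≤ M * ‖y‖ ^ β) (hwβ : Integrable (fun y => ‖y‖ ^ β * w y) ν) :
    Integrable (fun y => Q y * w y) ν := by
  refine (hwβ.norm.const_mul M).mono' (hQ.mul hw) (ae_of_all _ fun y => ?_)
  rw [norm_mul, norm_mul, Real.norm_of_nonneg (by positivity : (0 : ℝ) ≤ ‖y‖ ^ β), ← mul_assoc]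
  exact mul_le_mul_of_nonneg_right (hQM y) (norm_nonneg _)

theorem tendsto_integral_sub_div_rpow [NormedSpace ℝ E] [BorelSpace E] {ν : Measure E} {K Q w : E → ℝ} {ξ : E}
    {β C M : ℝ} (hβ : 0 ≤ β) (hKm : Measurable K) (hKb : ∀ x, |K x| ≤ C)
    (hQhom : ∀ l : ℝ, 0 ≤ l → ∀ x, Q (l • x) = l ^ β * Q x) (hQM : ∀ y, |Q y| ≤ M * ‖y‖ ^ β)
    (hTaylor : (fun x => K x - K ξ - Q (x - ξ)) =o[𝓝 ξ] fun x => ‖x - ξ‖ ^ β)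
    (hw : Integrable w ν) (hwβ : Integrable (fun y => ‖y‖ ^ β * w y) ν) :
    Tendsto (fun μ : ℝ => (∫ y, K (μ • y + ξ) * w y ∂ν - ∫ y, K ξ * w y ∂ν) / μ ^ β)
      (𝓝[>] 0) (𝓝 (∫ y, Q y * w y ∂ν)) := by
  obtain ⟨L, hL⟩ := exists_abs_sub_le_mul_norm_sub_rpow hβ hKb hQM hTaylor
  have hKμ (μ : ℝ) : Measurable fun y => K (μ • y + ξ) := hKm.comp (by fun_prop)
  have hquot (μ : ℝ) : (∫ y, K (μ • y + ξ) * w y ∂ν - ∫ y, K ξ * w y ∂ν) / μ ^ β =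
      ∫ y, (K (μ • y + ξ) - K ξ) / μ ^ β * w y ∂ν := by
    have hint : Integrable (fun y => K (μ • y + ξ) * w y) ν :=
      hw.bdd_mul (hKμ μ).aestronglyMeasurable (ae_of_all _ fun y => hKb _)
    rw [← integral_sub hint (hw.const_mul _), ← integral_div]
    congr with y
    ring
  simp_rw [hquot]
  refine tendsto_integral_filter_of_dominated_convergence (fun y => L * ‖‖y‖ ^ β * w y‖)
    (Eventually.of_forall fun μ => (((hKμ μ).sub_const _).div_const _).aestronglyMeasurable.mul
      hw.aestronglyMeasurable) ?_ (hwβ.norm.const_mul L)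
    (ae_of_all _ fun y => (tendsto_sub_div_rpow_of_isLittleO hQhom hTaylor y).mul_const (w y))
  filter_upwards [self_mem_nhdsWithin] with μ (hμ : 0 < μ)
  refine ae_of_all _ fun y => ?_
  have hμβ : 0 < μ ^ β := Real.rpow_pos_of_pos hμ β
  have hdiff : |K (μ • y + ξ) - K ξ| / μ ^ β ≤ L * ‖y‖ ^ β := by
    rw [div_le_iff₀ hμβ]
    calc |K (μ • y + ξ) - K ξ| ≤ L * ‖μ • y + ξ - ξ‖ ^ β := hL _
      _ = L * ‖y‖ ^ β * μ ^ β := by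
        rw [add_sub_cancel_right, norm_smul, Real.norm_of_nonneg hμ.le,
          Real.mul_rpow hμ.le (norm_nonneg y)]
        ring
  rw [norm_mul, norm_mul, norm_div, Real.norm_of_nonneg hμβ.le, Real.norm_eq_abs,
    Real.norm_of_nonneg (by positivity : (0 : ℝ) ≤ ‖y‖ ^ β), ← mul_assoc]
  exact mul_le_mul_of_nonneg_right hdiff (norm_nonneg _)

theorem integrable_norm_rpow_mul_rpow_neg_one_add_norm_sq [NormedSpace ℝ E] [FiniteDimensional ℝ E]
    [BorelSpace E]
    {ν : Measure E} [ν.IsAddHaarMeasure] {β r : ℝ} (hβ : 0 ≤ β)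
    (hr : (Module.finrank ℝ E : ℝ) + β < r) :
    Integrable (fun y => ‖y‖ ^ β * (1 + ‖y‖ ^ 2) ^ (-r / 2)) ν := by
  have hr0 : 0 < r := by linarith [(Module.finrank ℝ E).cast_nonneg (α := ℝ)]
  refine ((integrable_one_add_norm (μ := ν) (r := r - β) (by linarith)).const_mul
    ((2 : ℝ) ^ (r / 2))).mono' (by fun_prop) (ae_of_all _ fun y => ?_)
  have hy : 0 < 1 + ‖y‖ := by positivity
  rw [Real.norm_of_nonneg (by positivity)]
  calc ‖y‖ ^ β * (1 + ‖y‖ ^ 2) ^ (-r / 2)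
      ≤ (1 + ‖y‖) ^ β * ((2 : ℝ) ^ (r / 2) * (1 + ‖y‖) ^ (-r)) := by
        gcongr
        · linarith
        · exact rpow_neg_one_add_norm_sq_le y hr0
    _ = (2 : ℝ) ^ (r / 2) * (1 + ‖y‖) ^ (-(r - β)) := by
        rw [neg_sub, sub_eq_add_neg, Real.rpow_add hy]
        ring

end Integral

section Bubble

variable {n : ℕ} {γ α p : ℝ}

theorem z0_rpow_eq (hγ : (n : ℝ) ≠ 2 * γ) (hp : p = ((n : ℝ) + 2 * γ) / ((n : ℝ) - 2 * γ))
    (hα : 0 < α) (y : EuclideanSpace ℝ (Fin n)) :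
    z0 n γ α y ^ (p + 1) = α ^ (p + 1) * (1 + ‖y‖ ^ 2) ^ (-(2 * n : ℝ) / 2) := by
  have hexp : -(((n : ℝ) - 2 * γ) / 2) * (p + 1) = -(2 * n : ℝ) / 2 := by
    have : (n : ℝ) - 2 * γ ≠ 0 := sub_ne_zero.mpr hγ
    rw [hp]
    field_simp
    ring
  rw [z0, Real.mul_rpow hα.le (by positivity), ← Real.rpow_mul (by positivity), hexp]

theorem integrable_norm_rpow_mul_z0_rpow (hγ : (n : ℝ) ≠ 2 * γ)
    (hp : p = ((n : ℝ) + 2 * γ) / ((n : ℝ) - 2 * γ)) (hα : 0 < α) {β : ℝ} (hβ : 0 ≤ β)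
    (hβn : β < n) :
    Integrable fun y : EuclideanSpace ℝ (Fin n) => ‖y‖ ^ β * z0 n γ α y ^ (p + 1) := by
  simp_rw [z0_rpow_eq hγ hp hα, mul_left_comm _ (α ^ (p + 1))]
  exact (integrable_norm_rpow_mul_rpow_neg_one_add_norm_sq hβ (by simp; linarith)).const_mul _

end Bubble

theorem stmt9_general (n : ℕ) (γ : ℝ) (hγn : γ < (n : ℝ) / 2)
    (p : ℝ) (hp : p = ((n : ℝ) + 2 * γ) / ((n : ℝ) - 2 * γ))
    (α : ℝ) (hα : 0 < α)
    (K : EuclideanSpace ℝ (Fin n) → ℝ) (hKc : Continuous K)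
    (hKb : ∃ C, ∀ x, |K x| ≤ C)
    (ξ : EuclideanSpace ℝ (Fin n))
    (β : ℝ) (hβ1 : 1 < β) (hβn : β < (n : ℝ))
    (Q : EuclideanSpace ℝ (Fin n) → ℝ) (hQc : Continuous Q)
    (hQhom : ∀ l : ℝ, 0 ≤ l → ∀ x, Q (l • x) = l ^ β * Q x)
    (hTaylor : (fun x => K x - K ξ - Q (x - ξ)) =o[𝓝 ξ] fun x => ‖x - ξ‖ ^ β) :
    Integrable (fun y => Q y * z0 n γ α y ^ (p + 1)) ∧
    Tendsto (fun μ : ℝ => (Gam n γ α p K μ ξ - Gam n γ α p K 0 ξ) / μ ^ β)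
      (𝓝[>] 0)
      (𝓝 ((1 / (p + 1)) * ∫ y, Q y * z0 n γ α y ^ (p + 1))) := by
  obtain ⟨C, hC⟩ := hKb
  have hβ : 0 < β := by linarith
  have hγ : (n : ℝ) ≠ 2 * γ := by linarith
  obtain ⟨M, hM⟩ := exists_abs_le_mul_norm_rpow_of_homogeneous hβ hQc hQhom
  have hw : Integrable fun y : EuclideanSpace ℝ (Fin n) => z0 n γ α y ^ (p + 1) := by
    simpa using integrable_norm_rpow_mul_z0_rpow hγ hp hα le_rfl (by linarith)
  have hwβ := integrable_norm_rpow_mul_z0_rpow hγ hp hα hβ.le hβn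
  refine ⟨integrable_mul_of_abs_le_mul_norm_rpow hQc.aestronglyMeasurable
    hw.aestronglyMeasurable hM hwβ, ?_⟩
  refine ((tendsto_integral_sub_div_rpow hβ.le hKc.measurable hC hQhom hM hTaylor hw hwβ).const_mul
    (1 / (p + 1))).congr fun μ => ?_
  simp only [Gam, zero_smul, zero_add]
  ring

theorem stmt9 (n : ℕ) (hn : 1 ≤ n) (γ : ℝ) (hγ : 0 < γ) (hγn : γ < (n : ℝ) / 2)
    (p : ℝ) (hp : p = ((n : ℝ) + 2 * γ) / ((n : ℝ) - 2 * γ))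
    (α : ℝ) (hα : 0 < α)
    (K : EuclideanSpace ℝ (Fin n) → ℝ) (hKc : Continuous K)
    (hKb : ∃ C, ∀ x, |K x| ≤ C)
    (ξ : EuclideanSpace ℝ (Fin n))
    (β : ℝ) (hβ1 : 1 < β) (hβn : β < (n : ℝ))
    (Q : EuclideanSpace ℝ (Fin n) → ℝ) (hQc : Continuous Q)
    (hQhom : ∀ l : ℝ, 0 ≤ l → ∀ x, Q (l • x) = l ^ β * Q x)
    (hTaylor : (fun x => K x - K ξ - Q (x - ξ)) =o[𝓝 ξ] fun x => ‖x - ξ‖ ^ β) :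
    Integrable (fun y => Q y * z0 n γ α y ^ (p + 1)) ∧
    Tendsto (fun μ : ℝ => (Gam n γ α p K μ ξ - Gam n γ α p K 0 ξ) / μ ^ β)
      (𝓝[>] 0)
      (𝓝 ((1 / (p + 1)) * ∫ y, Q y * z0 n γ α y ^ (p + 1))) :=
  stmt9_general n γ hγn p hp α hα K hKc hKb ξ β hβ1 hβn Q hQc hQhom hTaylor
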